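/- arXiv:2305.01445 — 2 statements merged into one kernel-verified Lean document; each statement's English description precedes it below -/
import Mathlib

section
/- There exists a constant C > 0, depending only on T, p, C_{ℓ,2}, C_{ℓ,3}, C_{g,1}, C_{g,2} and C_A := max( sup_{t∈[0,T]} |A(t,0)| , L_A ), such that for every t ∈ [0,T] and x ∈ ℝ^d the value function satisfies −(T C_{ℓ,2} + C_{g,1}) ≤ v(t,x) ≤ C (1 + |x|^p). -/
open MeasureTheory Set intervalIntegral Filter

noncomputable section

/-- `γ` is the trajectory on `[t,T]` driven by the control `α`, starting from `x` at time `t`. -/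
def IsTrajectory (d r : ℕ) (T : ℝ) (A : ℝ → (Fin d → ℝ) → (Fin d → ℝ))
    (B : ℝ → ((Fin r → ℝ) →L[ℝ] (Fin d → ℝ)))
    (t : ℝ) (x : Fin d → ℝ) (α : ℝ → (Fin r → ℝ)) (γ : ℝ → (Fin d → ℝ)) : Prop :=
  ContinuousOn γ (Set.Icc t T) ∧
    ∀ s ∈ Set.Icc t T, γ s = x + ∫ u in t..s, (A u (γ u) + B u (α u))

/-- `α` is an admissible control on `[t,T]`: measurable with `∫_t^T |α(s)|^p ds < ∞`. -/
def IsControl (r : ℕ) (p T t : ℝ) (α : ℝ → (Fin r → ℝ)) : Prop :=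
  Measurable α ∧ IntegrableOn (fun s => ‖α s‖ ^ p) (Set.Icc t T)

/-- The set of costs `J^{t,x}(α)` achievable by admissible controls from `(t,x)`. -/
def CostSet (d r : ℕ) (T p : ℝ) (A : ℝ → (Fin d → ℝ) → (Fin d → ℝ))
    (B : ℝ → ((Fin r → ℝ) →L[ℝ] (Fin d → ℝ)))
    (ℓ : ℝ → (Fin r → ℝ) → (Fin d → ℝ) → ℝ) (g : (Fin d → ℝ) → ℝ)
    (t : ℝ) (x : Fin d → ℝ) : Set ℝ :=
  {c | ∃ (α : ℝ → (Fin r → ℝ)) (γ : ℝ → (Fin d → ℝ)),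
      IsControl r p T t α ∧ IsTrajectory d r T A B t x α γ ∧
      c = (∫ s in t..T, ℓ s (α s) (γ s)) + g (γ T)}

/-- The value function `v(t,x) = inf { J^{t,x}(α) : α ∈ L^p([t,T];ℝ^r) }`. -/
def value (d r : ℕ) (T p : ℝ) (A : ℝ → (Fin d → ℝ) → (Fin d → ℝ))
    (B : ℝ → ((Fin r → ℝ) →L[ℝ] (Fin d → ℝ)))
    (ℓ : ℝ → (Fin r → ℝ) → (Fin d → ℝ) → ℝ) (g : (Fin d → ℝ) → ℝ)
    (t : ℝ) (x : Fin d → ℝ) : ℝ :=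
  sInf (CostSet d r T p A B ℓ g t x)

/-!
Every cost is at least `-(T C_{ℓ,2} + C_{g,1})`, pointwise from the lower bounds on `ℓ` and `g`.
For the upper bound, test the infimum with the zero control. Since `A` is globally Lipschitz,
Picard–Lindelöf applies on time steps of length `1 / (2 L_A)` from any initial point, so the
uncontrolled trajectory exists on all of `[t, T]`; Grönwall bounds it by
`e^{L_A T} (|x| + sup_s |A(s,0)| / L_A)`, and the growth bounds on `ℓ` and `g` turn this into
a cost of order `1 + |x|^p`.
-/

section ODE

variable {E : Type*} [NormedAddCommGroup E] {v : ℝ → E → E} {γ φ : ℝ → E} {a b c L K : ℝ}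

lemma norm_le_mul_norm_add_of_lipschitz
    (hlip : ∀ t ∈ Icc a b, ∀ x y : E, ‖v t x - v t y‖ ≤ L * ‖x - y‖)
    (hK : ∀ t ∈ Icc a b, ‖v t 0‖ ≤ K) {t : ℝ} (ht : t ∈ Icc a b) (y : E) :
    ‖v t y‖ ≤ L * ‖y‖ + K :=
  calc ‖v t y‖ ≤ ‖v t y - v t 0‖ + ‖v t 0‖ := norm_le_norm_sub_add _ _
    _ ≤ L * ‖y‖ + K := by simpa using add_le_add (hlip t ht y 0) (hK t ht)

variable [NormedSpace ℝ E]

def IsODESolutionOn (v : ℝ → E → E) (γ : ℝ → E) (a b : ℝ) : Prop :=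
  ∀ s ∈ Icc a b, HasDerivWithinAt γ (v s (γ s)) (Icc a b) s

lemma isODESolutionOn_Icc_self (v : ℝ → E → E) (γ : ℝ → E) (a : ℝ) :
    IsODESolutionOn v γ a a := by
  intro s _
  rw [Icc_self]
  exact hasDerivWithinAt_iff_hasFDerivWithinAt.2 .singleton

lemma IsODESolutionOn.continuousOn (hγ : IsODESolutionOn v γ a b) : ContinuousOn γ (Icc a b) :=
  fun s hs => (hγ s hs).continuousWithinAt

lemma IsODESolutionOn.piecewise (hγ : IsODESolutionOn v γ a c) (hφ : IsODESolutionOn v φ c b)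
    (hac : a ≤ c) (hcb : c ≤ b) (hφc : φ c = γ c) :
    IsODESolutionOn v (fun s => if s ≤ c then γ s else φ s) a b := by
  have hleft : ∀ s ∈ Icc a c, (if s ≤ c then γ s else φ s) = γ s := fun s hs => if_pos hs.2
  have hright : ∀ s ∈ Icc c b, (if s ≤ c then γ s else φ s) = φ s := by
    intro s hs
    rcases hs.1.eq_or_lt with rfl | hlt
    · simp [hφc]
    · exact if_neg hlt.not_ge
  have off : ∀ {s : ℝ} {I : Set ℝ} {f : ℝ → E} {f' : E}, IsClosed I → s ∉ I →
      HasDerivWithinAt f f' I s := fun hI hs =>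
    hasDerivWithinAt_iff_hasFDerivWithinAt.2 (.of_notMem_closure (by rwa [hI.closure_eq]))
  intro s hs
  rw [← Icc_union_Icc_eq_Icc hac hcb]
  refine HasDerivWithinAt.union ?_ ?_
  · by_cases hsc : s ≤ c
    · exact ((hγ s ⟨hs.1, hsc⟩).congr hleft (hleft s ⟨hs.1, hsc⟩)).congr_deriv
        (congrArg (v s) (hleft s ⟨hs.1, hsc⟩)).symm
    · exact off isClosed_Icc fun h => hsc h.2
  · by_cases hcs : c ≤ s
    · exact ((hφ s ⟨hcs, hs.2⟩).congr hright (hright s ⟨hcs, hs.2⟩)).congr_deriv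
        (congrArg (v s) (hright s ⟨hcs, hs.2⟩)).symm
    · exact off isClosed_Icc fun h => hcs h.1

lemma IsODESolutionOn.norm_le_gronwallBound (hγ : IsODESolutionOn v γ a b)
    (hgrowth : ∀ t ∈ Icc a b, ∀ y, ‖v t y‖ ≤ L * ‖y‖ + K) {s : ℝ} (hs : s ∈ Icc a b) :
    ‖γ s‖ ≤ gronwallBound ‖γ a‖ L K (s - a) :=
  norm_le_gronwallBound_of_norm_deriv_right_le hγ.continuousOn
    (fun t ht => (hγ t (Ico_subset_Icc_self ht)).mono_of_mem_nhdsWithin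
      (Icc_mem_nhdsGE_of_mem ht))
    le_rfl (fun t ht => hgrowth t (Ico_subset_Icc_self ht) _) s hs

variable [CompleteSpace E]

lemma IsODESolutionOn.eq_add_integral (hγ : IsODESolutionOn v γ a b)
    (hcont : ContinuousOn (fun s => v s (γ s)) (Icc a b)) {s : ℝ} (hs : s ∈ Icc a b) :
    γ s = γ a + ∫ u in a..s, v u (γ u) := by
  have hsub : Icc a s ⊆ Icc a b := Icc_subset_Icc_right hs.2
  rw [integral_eq_sub_of_hasDerivAt_of_le hs.1 (hγ.continuousOn.mono hsub)
    (fun u hu => (hγ u (hsub (Ioo_subset_Icc_self hu))).hasDerivAt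
      (Icc_mem_nhds hu.1 (hu.2.trans_le hs.2)))
    ((hcont.mono hsub).intervalIntegrable_of_Icc hs.1)]
  abel

/-- The admissible length `1 / (2 L)` does not depend on the initial point `y`, so these local
solutions can be chained along any compact interval. -/
lemma exists_isODESolutionOn_of_two_mul_sub_le (hL : 0 < L)
    (hcont : ∀ y, ContinuousOn (v · y) (Icc a b))
    (hlip : ∀ t ∈ Icc a b, ∀ x y : E, ‖v t x - v t y‖ ≤ L * ‖x - y‖)
    (hK : ∀ t ∈ Icc a b, ‖v t 0‖ ≤ K) (hab : a ≤ b) (hlen : 2 * L * (b - a) ≤ 1) (y : E) :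
    ∃ φ, φ a = y ∧ IsODESolutionOn v φ a b := by
  have hK0 : 0 ≤ K := (norm_nonneg _).trans (hK a (left_mem_Icc.2 hab))
  -- `R` is chosen so that the bound `2 L R` of `v` on the ball of radius `R`, times `1 / (2 L)`,
  -- does not exceed `R`
  set R := ‖y‖ + K / L
  have hR : 0 ≤ R := by positivity
  have hLR : L * (‖y‖ + R) + K = 2 * L * R := by
    simp only [R]
    field_simp
    ring
  have hpl : IsPicardLindelof v (tmin := a) (tmax := b) ⟨a, left_mem_Icc.2 hab⟩ y R.toNNReal 0
      (2 * L * R).toNNReal L.toNNReal :=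
    { lipschitzOnWith := fun t ht => LipschitzOnWith.of_dist_le_mul fun z _ w _ => by
        simpa [dist_eq_norm, hL.le] using hlip t ht z w
      continuousOn := fun z _ => hcont z
      norm_le := fun t ht z hz => by
        have hz' : ‖z‖ ≤ ‖y‖ + R := by
          have := mem_closedBall_iff_norm.1 hz
          rw [Real.coe_toNNReal _ hR] at this
          linarith [norm_le_norm_add_norm_sub' z y]
        rw [Real.coe_toNNReal _ (by positivity), ← hLR]
        calc ‖v t z‖ ≤ L * ‖z‖ + K := norm_le_mul_norm_add_of_lipschitz hlip hK ht z
          _ ≤ L * (‖y‖ + R) + K := by gcongr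
      mul_max_le := by
        rw [Real.coe_toNNReal _ (by positivity), Real.coe_toNNReal _ hR]
        simp only [sub_self, NNReal.coe_zero, sub_zero, max_eq_left (sub_nonneg.2 hab)]
        nlinarith }
  exact hpl.exists_eq_forall_mem_Icc_hasDerivWithinAt₀

lemma exists_isODESolutionOn (hL : 0 < L)
    (hcont : ∀ y, ContinuousOn (v · y) (Icc a b))
    (hlip : ∀ t ∈ Icc a b, ∀ x y : E, ‖v t x - v t y‖ ≤ L * ‖x - y‖)
    (hK : ∀ t ∈ Icc a b, ‖v t 0‖ ≤ K) (hab : a ≤ b) (x : E) :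
    ∃ γ, γ a = x ∧ IsODESolutionOn v γ a b := by
  set h := 1 / (2 * L)
  have hh : 0 < h := by positivity
  have steps : ∀ n : ℕ, ∀ c ∈ Icc a b, c ≤ a + n * h →
      ∃ γ, γ a = x ∧ IsODESolutionOn v γ a c := by
    intro n
    induction n with
    | zero =>
      intro c hc hcn
      obtain rfl : c = a := le_antisymm (by simpa using hcn) hc.1
      exact ⟨fun _ => x, rfl, isODESolutionOn_Icc_self _ _ _⟩
    | succ n ih =>
      intro c hc hcn
      by_cases hcn' : c ≤ a + n * h
      · exact ih c hc hcn'
      set c₀ := a + n * h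
      have hac₀ : a ≤ c₀ := le_add_of_nonneg_right (by positivity)
      have hc₀c : c₀ ≤ c := (not_le.1 hcn').le
      obtain ⟨γ, hγa, hγ⟩ := ih c₀ ⟨hac₀, hc₀c.trans hc.2⟩ le_rfl
      have hsub : Icc c₀ c ⊆ Icc a b := Icc_subset_Icc hac₀ hc.2
      have hlen : 2 * L * (c - c₀) ≤ 1 := by
        have : c - c₀ ≤ h := by push_cast at hcn; linarith
        calc 2 * L * (c - c₀) ≤ 2 * L * h := by gcongr
          _ = 1 := by simp only [h]; field_simp
      obtain ⟨φ, hφc₀, hφ⟩ := exists_isODESolutionOn_of_two_mul_sub_le hL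
        (fun y => (hcont y).mono hsub) (fun t ht => hlip t (hsub ht))
        (fun t ht => hK t (hsub ht)) hc₀c hlen (γ c₀)
      exact ⟨_, by simp [hac₀, hγa], hγ.piecewise hφ hac₀ hc₀c hφc₀⟩
  obtain ⟨n, hn⟩ := exists_nat_ge ((b - a) / h)
  refine steps n b (right_mem_Icc.2 hab) ?_
  rw [div_le_iff₀ hh] at hn
  linarith

end ODE

lemma gronwallBound_le_exp_mul {δ K ε x : ℝ} (hK : 0 < K) (hε : 0 ≤ ε) :
    gronwallBound δ K ε x ≤ Real.exp (K * x) * (δ + ε / K) := by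
  rw [gronwallBound_of_K_ne_0 hK.ne']
  have : 0 ≤ ε / K := div_nonneg hε hK.le
  nlinarith

lemma exists_one_add_rpow_le {p c β : ℝ} (hp : 1 ≤ p) (hc : 0 ≤ c) (hβ : 0 ≤ β) :
    ∃ C > 0, ∀ y : ℝ, 0 ≤ y → 1 + (c * (y + β)) ^ p ≤ C * (1 + y ^ p) := by
  set D := c ^ p * 2 ^ (p - 1) * (1 + β ^ p)
  refine ⟨1 + D, by positivity, fun y hy => ?_⟩
  have hsum : (y + β) ^ p ≤ 2 ^ (p - 1) * (y ^ p + β ^ p) := by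
    exact_mod_cast NNReal.rpow_add_le_mul_rpow_add_rpow ⟨y, hy⟩ ⟨β, hβ⟩ hp
  have hyp : 0 ≤ y ^ p := by positivity
  have hβp : 0 ≤ β ^ p := by positivity
  calc 1 + (c * (y + β)) ^ p = 1 + c ^ p * (y + β) ^ p := by rw [Real.mul_rpow hc (by positivity)]
    _ ≤ 1 + c ^ p * (2 ^ (p - 1) * (y ^ p + β ^ p)) := by gcongr
    _ = 1 + c ^ p * 2 ^ (p - 1) * (y ^ p + β ^ p) := by ring
    _ ≤ 1 + c ^ p * 2 ^ (p - 1) * ((1 + β ^ p) * (1 + y ^ p)) := by gcongr; nlinarith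
    _ = 1 + D * (1 + y ^ p) := by ring
    _ ≤ (1 + D) * (1 + y ^ p) := by nlinarith

/-- Without integrability the interval integral is `0`, which the bound also dominates. -/
lemma intervalIntegral_le_sub_mul_of_le {f : ℝ → ℝ} {a b C : ℝ} (hab : a ≤ b) (hC : 0 ≤ C)
    (hf : ∀ s ∈ Icc a b, f s ≤ C) : ∫ s in a..b, f s ≤ (b - a) * C := by
  by_cases hint : IntervalIntegrable f volume a b
  · simpa using integral_mono_on hab hint intervalIntegrable_const hf
  · rw [intervalIntegral.integral_undef hint]
    exact mul_nonneg (sub_nonneg.2 hab) hC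

section ControlProblem

variable {d r : ℕ} {T p t Cl1 Cl2 Cl3 Cg1 Cg2 : ℝ}
  {A : ℝ → (Fin d → ℝ) → (Fin d → ℝ)} {B : ℝ → ((Fin r → ℝ) →L[ℝ] (Fin d → ℝ))}

lemma mem_lowerBounds_costSet {ℓ : ℝ → (Fin r → ℝ) → (Fin d → ℝ) → ℝ} {g : (Fin d → ℝ) → ℝ}
    {x : Fin d → ℝ} (ht : t ∈ Icc 0 T) (hCl1 : 0 ≤ Cl1) (hCl2 : 0 ≤ Cl2)
    (hl_lb : ∀ t ∈ Icc 0 T, ∀ (a : Fin r → ℝ) (x : Fin d → ℝ), Cl1 * ‖a‖ ^ p - Cl2 ≤ ℓ t a x)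
    (hg_lb : ∀ x : Fin d → ℝ, -Cg1 ≤ g x) :
    -(T * Cl2 + Cg1) ∈ lowerBounds (CostSet d r T p A B ℓ g t x) := by
  rintro _ ⟨α, γ, -, -, rfl⟩
  have hℓ : -(∫ s in t..T, ℓ s (α s) (γ s)) ≤ (T - t) * Cl2 := by
    rw [← intervalIntegral.integral_neg]
    refine intervalIntegral_le_sub_mul_of_le ht.2 hCl2 fun s hs => ?_
    have := hl_lb s (Icc_subset_Icc_left ht.1 hs) (α s) (γ s)
    have : 0 ≤ Cl1 * ‖α s‖ ^ p := by positivity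
    linarith
  have := hg_lb (γ T)
  nlinarith [ht.1]

lemma isControl_zero (hp : 0 < p) : IsControl r p T t fun _ => 0 :=
  ⟨measurable_const, by simp [Real.zero_rpow hp.ne']⟩

lemma isTrajectory_zero {γ : ℝ → Fin d → ℝ} {x : Fin d → ℝ} (hγt : γ t = x)
    (hγ : IsODESolutionOn A γ t T) (hcont : ContinuousOn (fun s => A s (γ s)) (Icc t T)) :
    IsTrajectory d r T A B t x (fun _ => 0) γ :=
  ⟨hγ.continuousOn, fun s hs => by simpa [hγt] using hγ.eq_add_integral hcont hs⟩

end ControlProblem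

lemma zero_control_cost_le {F G : Type*} [NormedAddCommGroup F] [NormedAddCommGroup G]
    {ℓ : ℝ → F → G → ℝ} {g : G → ℝ} {γ : ℝ → G} {T p t Cl3 Cg2 M : ℝ}
    (hp : 0 < p) (ht : t ∈ Icc 0 T) (hCl3 : 0 ≤ Cl3) (hCg2 : 0 ≤ Cg2)
    (hl_ub : ∀ t ∈ Icc 0 T, ∀ (a : F) (x : G), ℓ t a x ≤ Cl3 * (1 + ‖a‖ ^ p + ‖x‖ ^ p))
    (hg_ub : ∀ x : G, g x ≤ Cg2 * (1 + ‖x‖ ^ p)) (hγ : ∀ s ∈ Icc t T, ‖γ s‖ ≤ M) :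
    (∫ s in t..T, ℓ s 0 (γ s)) + g (γ T) ≤ (T * Cl3 + Cg2) * (1 + M ^ p) := by
  have hM : 0 ≤ M := (norm_nonneg _).trans (hγ T (right_mem_Icc.2 ht.2))
  have hℓ : ∫ s in t..T, ℓ s 0 (γ s) ≤ (T - t) * (Cl3 * (1 + M ^ p)) := by
    refine intervalIntegral_le_sub_mul_of_le ht.2 (by positivity) fun s hs => ?_
    calc ℓ s 0 (γ s) ≤ Cl3 * (1 + ‖(0 : F)‖ ^ p + ‖γ s‖ ^ p) :=
          hl_ub s (Icc_subset_Icc_left ht.1 hs) 0 (γ s)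
      _ ≤ Cl3 * (1 + M ^ p) := by
          rw [norm_zero, Real.zero_rpow hp.ne', add_zero]
          gcongr
          exact hγ s hs
  have hg : g (γ T) ≤ Cg2 * (1 + M ^ p) :=
    (hg_ub _).trans (by gcongr; exact hγ T (right_mem_Icc.2 ht.2))
  nlinarith [mul_nonneg ht.1 (mul_nonneg hCl3 (by positivity : 0 ≤ 1 + M ^ p))]

theorem statement6_general
    (d r : ℕ)
    (T : ℝ) (hT : 0 < T) (p : ℝ) (hp : 1 < p)
    (A : ℝ → (Fin d → ℝ) → (Fin d → ℝ)) (B : ℝ → ((Fin r → ℝ) →L[ℝ] (Fin d → ℝ)))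
    (hAcont : ContinuousOn (fun q : ℝ × (Fin d → ℝ) => A q.1 q.2) (Set.Icc 0 T ×ˢ Set.univ))
    (LA : ℝ) (hLA : 0 < LA)
    (hALip : ∀ t ∈ Set.Icc 0 T, ∀ x y : Fin d → ℝ, ‖A t x - A t y‖ ≤ LA * ‖x - y‖)
    (ℓ : ℝ → (Fin r → ℝ) → (Fin d → ℝ) → ℝ) (g : (Fin d → ℝ) → ℝ)
    (Cl1 Cl2 Cl3 Cg1 Cg2 : ℝ)
    (hCl1 : 0 < Cl1) (hCl2 : 0 < Cl2) (hCl3 : 0 < Cl3)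
    (hCg2 : 0 < Cg2)
    (hl_lb : ∀ t ∈ Set.Icc 0 T, ∀ (a : Fin r → ℝ) (x : Fin d → ℝ),
      Cl1 * ‖a‖ ^ p - Cl2 ≤ ℓ t a x)
    (hl_ub : ∀ t ∈ Set.Icc 0 T, ∀ (a : Fin r → ℝ) (x : Fin d → ℝ),
      ℓ t a x ≤ Cl3 * (1 + ‖a‖ ^ p + ‖x‖ ^ p))
    (hg_lb : ∀ x : Fin d → ℝ, -Cg1 ≤ g x)
    (hg_ub : ∀ x : Fin d → ℝ, g x ≤ Cg2 * (1 + ‖x‖ ^ p)) :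
    ∃ C : ℝ, 0 < C ∧ ∀ t ∈ Set.Icc 0 T, ∀ x : Fin d → ℝ,
      -(T * Cl2 + Cg1) ≤ value d r T p A B ℓ g t x ∧
      value d r T p A B ℓ g t x ≤ C * (1 + ‖x‖ ^ p) := by
  have hAcomp : ∀ {I : Set ℝ} {f : ℝ → Fin d → ℝ}, I ⊆ Icc 0 T → ContinuousOn f I →
      ContinuousOn (fun s => A s (f s)) I := fun hI hf =>
    hAcont.comp (continuousOn_id.prodMk hf) fun s hs => ⟨hI hs, mem_univ _⟩
  obtain ⟨K, hK⟩ :=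
    isCompact_Icc.exists_bound_of_continuousOn (hAcomp subset_rfl continuousOn_const)
  have hK0 : 0 ≤ K := (norm_nonneg _).trans (hK 0 (left_mem_Icc.2 hT.le))
  obtain ⟨C, hC, hgrowth⟩ :=
    exists_one_add_rpow_le hp.le (Real.exp_pos (LA * T)).le (div_nonneg hK0 hLA.le)
  refine ⟨(T * Cl3 + Cg2) * C, by positivity, fun t ht x => ?_⟩
  have hsub : Icc t T ⊆ Icc 0 T := Icc_subset_Icc_left ht.1
  obtain ⟨γ, hγt, hγ⟩ := exists_isODESolutionOn hLA (fun _ => hAcomp hsub continuousOn_const)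
    (fun s hs => hALip s (hsub hs)) (fun s hs => hK s (hsub hs)) ht.2 x
  have hγM : ∀ s ∈ Icc t T, ‖γ s‖ ≤ Real.exp (LA * T) * (‖x‖ + K / LA) := fun s hs =>
    calc ‖γ s‖ ≤ gronwallBound ‖x‖ LA K (s - t) := hγt ▸ hγ.norm_le_gronwallBound
          (fun s hs' y => norm_le_mul_norm_add_of_lipschitz hALip hK (hsub hs') y) hs
      _ ≤ gronwallBound ‖x‖ LA K T :=
          gronwallBound_mono (norm_nonneg _) hK0 hLA.le (by linarith [hs.2, ht.1])
      _ ≤ _ := gronwallBound_le_exp_mul hLA hK0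
  have hmem : (∫ s in t..T, ℓ s 0 (γ s)) + g (γ T) ∈ CostSet d r T p A B ℓ g t x :=
    ⟨_, γ, isControl_zero (zero_lt_one.trans hp),
      isTrajectory_zero hγt hγ (hAcomp hsub hγ.continuousOn), rfl⟩
  have hlb := mem_lowerBounds_costSet (A := A) (B := B) (x := x) ht hCl1.le hCl2.le hl_lb hg_lb
  refine ⟨le_csInf ⟨_, hmem⟩ hlb, (csInf_le ⟨_, hlb⟩ hmem).trans ?_⟩
  calc _ ≤ (T * Cl3 + Cg2) * (1 + (Real.exp (LA * T) * (‖x‖ + K / LA)) ^ p) :=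
        zero_control_cost_le (zero_lt_one.trans hp) ht hCl3.le hCg2.le hl_ub hg_ub hγM
    _ ≤ (T * Cl3 + Cg2) * (C * (1 + ‖x‖ ^ p)) := by
        gcongr
        exact hgrowth _ (norm_nonneg x)
    _ = _ := by ring

/-- there is `C > 0` (independent of `t` and `x`) such that
`−(T C_{ℓ,2} + C_{g,1}) ≤ v(t,x) ≤ C (1 + |x|^p)` for all `t ∈ [0,T]`, `x ∈ ℝ^d`. -/
theorem statement6
    (d r : ℕ) (hd : 1 ≤ d) (hr : 1 ≤ r)
    (T : ℝ) (hT : 0 < T) (p : ℝ) (hp : 1 < p)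
    (A : ℝ → (Fin d → ℝ) → (Fin d → ℝ)) (B : ℝ → ((Fin r → ℝ) →L[ℝ] (Fin d → ℝ)))
    (hAcont : ContinuousOn (fun q : ℝ × (Fin d → ℝ) => A q.1 q.2) (Set.Icc 0 T ×ˢ Set.univ))
    (LA : ℝ) (hLA : 0 < LA)
    (hALip : ∀ t ∈ Set.Icc 0 T, ∀ x y : Fin d → ℝ, ‖A t x - A t y‖ ≤ LA * ‖x - y‖)
    (hBcont : ContinuousOn B (Set.Icc 0 T))
    (ℓ : ℝ → (Fin r → ℝ) → (Fin d → ℝ) → ℝ) (g : (Fin d → ℝ) → ℝ)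
    (hℓcont : ContinuousOn
      (fun q : ℝ × (Fin r → ℝ) × (Fin d → ℝ) => ℓ q.1 q.2.1 q.2.2)
      (Set.Icc 0 T ×ˢ (Set.univ : Set ((Fin r → ℝ) × (Fin d → ℝ)))))
    (hgcont : Continuous g)
    (Cl1 Cl2 Cl3 Cl4 Cg1 Cg2 Cg3 : ℝ)
    (hCl1 : 0 < Cl1) (hCl2 : 0 < Cl2) (hCl3 : 0 < Cl3) (hCl4 : 0 < Cl4)
    (hCg1 : 0 < Cg1) (hCg2 : 0 < Cg2) (hCg3 : 0 < Cg3)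
    (hl_lb : ∀ t ∈ Set.Icc 0 T, ∀ (a : Fin r → ℝ) (x : Fin d → ℝ),
      Cl1 * ‖a‖ ^ p - Cl2 ≤ ℓ t a x)
    (hl_ub : ∀ t ∈ Set.Icc 0 T, ∀ (a : Fin r → ℝ) (x : Fin d → ℝ),
      ℓ t a x ≤ Cl3 * (1 + ‖a‖ ^ p + ‖x‖ ^ p))
    (hl_lip : ∀ t ∈ Set.Icc 0 T, ∀ (a : Fin r → ℝ) (x y : Fin d → ℝ),
      |ℓ t a x - ℓ t a y| ≤ Cl4 * (1 + ‖x‖ ^ (p - 1) + ‖y‖ ^ (p - 1) + ‖a‖ ^ (p - 1)) * ‖x - y‖)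
    (hg_lb : ∀ x : Fin d → ℝ, -Cg1 ≤ g x)
    (hg_ub : ∀ x : Fin d → ℝ, g x ≤ Cg2 * (1 + ‖x‖ ^ p))
    (hg_lip : ∀ x y : Fin d → ℝ, |g x - g y| ≤ Cg3 * (1 + ‖x‖ ^ (p - 1) + ‖y‖ ^ (p - 1)) * ‖x - y‖) :
    ∃ C : ℝ, 0 < C ∧ ∀ t ∈ Set.Icc 0 T, ∀ x : Fin d → ℝ,
      -(T * Cl2 + Cg1) ≤ value d r T p A B ℓ g t x ∧
      value d r T p A B ℓ g t x ≤ C * (1 + ‖x‖ ^ p) :=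
  statement6_general d r T hT p hp A B hAcont LA hLA hALip ℓ g Cl1 Cl2 Cl3 Cg1 Cg2 hCl1 hCl2 hCl3
    hCg2 hl_lb hl_ub hg_lb hg_ub
end
end

section
/- Let t ∈ [0,T], x ∈ ℝ^d, and let (α_n)_{n∈ℕ} be a minimizing sequence for v(t,x), i.e. J^{t,x}(α_n) → v(t,x). Then the sequence (α_n) is bounded in L^p([t,T];ℝ^r): there is a constant K, depending only on T, p, the structural constants C_{ℓ,1}, C_{ℓ,2}, C_{ℓ,3}, C_{g,1}, C_{g,2}, C_A := max(sup_t|A(t,0)|, L_A), and |x|, such that sup_n ( ∫_t^T |α_n(s)|^p ds )^{1/p} ≤ K. -/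
open MeasureTheory Set intervalIntegral Filter

noncomputable section

/-! The costs `J(α_n)` converge, so they are bounded above by some `M`. Coercivity of the running
cost, `ℓ(s,a,x) ≥ C₁|a|^p − C₂`, together with `g ≥ −C_{g,1}`, gives
`C₁ ∫_t^T |α_n|^p − C₂ (T − t) − C_{g,1} ≤ J(α_n) ≤ M` for every `n`. -/

theorem ContinuousOn.comp_aestronglyMeasurable_of_ae_mem {α X β : Type*} [MeasurableSpace α]
    [TopologicalSpace X] [MeasurableSpace X] [OpensMeasurableSpace X] [TopologicalSpace β]
    [TopologicalSpace.PseudoMetrizableSpace β] [SecondCountableTopologyEither X β]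
    {μ : Measure α} {F : X → β} {S : Set X} {u : α → X}
    (hF : ContinuousOn F S) (hS : MeasurableSet S) (hu : AEMeasurable u μ)
    (hmem : ∀ᵐ a ∂μ, u a ∈ S) : AEStronglyMeasurable (fun a => F (u a)) μ := by
  have hS_full : (μ.map u).restrict S = μ.map u :=
    Measure.restrict_eq_self_of_ae_mem ((ae_map_iff hu hS).2 hmem)
  have hF_meas : AEStronglyMeasurable F (μ.map u) := hS_full ▸ hF.aestronglyMeasurable hS
  exact hF_meas.comp_aemeasurable hu

section RunningCost

variable {d r : ℕ} {p T t Cl1 Cl2 Cl3 : ℝ} {I : Set ℝ}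
  {ℓ : ℝ → (Fin r → ℝ) → (Fin d → ℝ) → ℝ} {α : ℝ → (Fin r → ℝ)} {γ : ℝ → (Fin d → ℝ)}

/- The growth bounds are what make the running cost integrable; otherwise its interval integral
would be the junk value `0` and the lower bound of `integral_runningCost_ge` could fail. -/
theorem integrableOn_runningCost (hp : 0 ≤ p) (htI : Icc t T ⊆ I) (hI : MeasurableSet I)
    (hℓcont : ContinuousOn (fun q : ℝ × (Fin r → ℝ) × (Fin d → ℝ) => ℓ q.1 q.2.1 q.2.2)
      (I ×ˢ (univ : Set ((Fin r → ℝ) × (Fin d → ℝ)))))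
    (hl_lb : ∀ s ∈ I, ∀ a x, Cl1 * ‖a‖ ^ p - Cl2 ≤ ℓ s a x)
    (hl_ub : ∀ s ∈ I, ∀ a x, ℓ s a x ≤ Cl3 * (1 + ‖a‖ ^ p + ‖x‖ ^ p))
    (hα : IsControl r p T t α) (hγ : ContinuousOn γ (Icc t T)) :
    IntegrableOn (fun s => ℓ s (α s) (γ s)) (Icc t T) := by
  have hmem : ∀ᵐ s ∂(volume.restrict (Icc t T)), s ∈ Icc t T := ae_restrict_mem measurableSet_Icc
  have hmeas : AEStronglyMeasurable (fun s => ℓ s (α s) (γ s)) (volume.restrict (Icc t T)) :=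
    hℓcont.comp_aestronglyMeasurable_of_ae_mem (hI.prod MeasurableSet.univ)
      (measurable_id.aemeasurable.prodMk
        (hα.1.aemeasurable.prodMk (hγ.aemeasurable measurableSet_Icc)))
      (hmem.mono fun s hs => ⟨htI hs, mem_univ _⟩)
  have hconst : IntegrableOn (fun _ => (1 : ℝ)) (Icc t T) :=
    integrableOn_const measure_Icc_lt_top.ne
  have hγp : IntegrableOn (fun s => ‖γ s‖ ^ p) (Icc t T) :=
    (hγ.norm.rpow_const fun _ _ => Or.inr hp).integrableOn_compact isCompact_Icc
  refine integrable_of_le_of_le hmeas ?_ ?_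
    ((hα.2.const_mul Cl1).sub (hconst.const_mul Cl2)) (((hconst.add hα.2).add hγp).const_mul Cl3)
  · filter_upwards [hmem] with s hs
    simpa using hl_lb s (htI hs) (α s) (γ s)
  · filter_upwards [hmem] with s hs
    exact hl_ub s (htI hs) (α s) (γ s)

theorem integral_runningCost_ge (hp : 0 ≤ p) (htT : t ≤ T) (htI : Icc t T ⊆ I)
    (hI : MeasurableSet I)
    (hℓcont : ContinuousOn (fun q : ℝ × (Fin r → ℝ) × (Fin d → ℝ) => ℓ q.1 q.2.1 q.2.2)
      (I ×ˢ (univ : Set ((Fin r → ℝ) × (Fin d → ℝ)))))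
    (hl_lb : ∀ s ∈ I, ∀ a x, Cl1 * ‖a‖ ^ p - Cl2 ≤ ℓ s a x)
    (hl_ub : ∀ s ∈ I, ∀ a x, ℓ s a x ≤ Cl3 * (1 + ‖a‖ ^ p + ‖x‖ ^ p))
    (hα : IsControl r p T t α) (hγ : ContinuousOn γ (Icc t T)) :
    Cl1 * (∫ s in t..T, ‖α s‖ ^ p) - Cl2 * (T - t) ≤ ∫ s in t..T, ℓ s (α s) (γ s) := by
  have hαp : IntervalIntegrable (fun s => ‖α s‖ ^ p) volume t T :=
    (intervalIntegrable_iff_integrableOn_Icc_of_le htT).2 hα.2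
  have hcost : IntervalIntegrable (fun s => ℓ s (α s) (γ s)) volume t T :=
    (intervalIntegrable_iff_integrableOn_Icc_of_le htT).2
      (integrableOn_runningCost hp htI hI hℓcont hl_lb hl_ub hα hγ)
  calc Cl1 * (∫ s in t..T, ‖α s‖ ^ p) - Cl2 * (T - t)
      = ∫ s in t..T, (Cl1 * ‖α s‖ ^ p - Cl2) := by
        rw [integral_sub (hαp.const_mul Cl1) intervalIntegrable_const,
          intervalIntegral.integral_const_mul, intervalIntegral.integral_const, smul_eq_mul,
          mul_comm Cl2]
    _ ≤ ∫ s in t..T, ℓ s (α s) (γ s) :=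
        integral_mono_on htT ((hαp.const_mul Cl1).sub intervalIntegrable_const) hcost
          fun s hs => hl_lb s (htI hs) (α s) (γ s)

end RunningCost

theorem statement15_general
    (d r : ℕ)
    (T : ℝ) (p : ℝ) (hp : 1 < p)
    (A : ℝ → (Fin d → ℝ) → (Fin d → ℝ)) (B : ℝ → ((Fin r → ℝ) →L[ℝ] (Fin d → ℝ)))
    (ℓ : ℝ → (Fin r → ℝ) → (Fin d → ℝ) → ℝ) (g : (Fin d → ℝ) → ℝ)
    (hℓcont : ContinuousOn
      (fun q : ℝ × (Fin r → ℝ) × (Fin d → ℝ) => ℓ q.1 q.2.1 q.2.2)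
      (Set.Icc 0 T ×ˢ (Set.univ : Set ((Fin r → ℝ) × (Fin d → ℝ)))))
    (Cl1 Cl2 Cl3 Cg1 : ℝ)
    (hCl1 : 0 < Cl1)
    (hl_lb : ∀ t ∈ Set.Icc 0 T, ∀ (a : Fin r → ℝ) (x : Fin d → ℝ),
      Cl1 * ‖a‖ ^ p - Cl2 ≤ ℓ t a x)
    (hl_ub : ∀ t ∈ Set.Icc 0 T, ∀ (a : Fin r → ℝ) (x : Fin d → ℝ),
      ℓ t a x ≤ Cl3 * (1 + ‖a‖ ^ p + ‖x‖ ^ p))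
    (hg_lb : ∀ x : Fin d → ℝ, -Cg1 ≤ g x)
    (t : ℝ) (ht : t ∈ Set.Icc 0 T) (x : Fin d → ℝ)
    (α : ℕ → ℝ → (Fin r → ℝ)) (γ : ℕ → ℝ → (Fin d → ℝ))
    (hα : ∀ n, IsControl r p T t (α n))
    (hγ : ∀ n, IsTrajectory d r T A B t x (α n) (γ n))
    (hmin : Tendsto (fun n => (∫ s in t..T, ℓ s (α n s) (γ n s)) + g (γ n T)) atTop
      (nhds (value d r T p A B ℓ g t x))) :
    ∃ K : ℝ, ∀ n, (∫ s in t..T, ‖α n s‖ ^ p) ^ (1 / p) ≤ K := by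
  obtain ⟨M, hM⟩ := hmin.bddAbove_range
  refine ⟨max 0 ((M + Cg1 + Cl2 * (T - t)) / Cl1) ^ (1 / p), fun n => ?_⟩
  have hcost := integral_runningCost_ge (by linarith) ht.2 (Icc_subset_Icc_left ht.1)
    measurableSet_Icc hℓcont hl_lb hl_ub (hα n) (hγ n).1
  have hJ : (∫ s in t..T, ℓ s (α n s) (γ n s)) + g (γ n T) ≤ M := hM ⟨n, rfl⟩
  have hbound : ∫ s in t..T, ‖α n s‖ ^ p ≤ (M + Cg1 + Cl2 * (T - t)) / Cl1 := by
    rw [le_div_iff₀' hCl1]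
    linarith [hg_lb (γ n T)]
  have hnonneg : 0 ≤ ∫ s in t..T, ‖α n s‖ ^ p :=
    integral_nonneg ht.2 fun s _ => by positivity
  exact Real.rpow_le_rpow hnonneg (hbound.trans (le_max_right _ _)) (by positivity)

/-- any minimizing sequence `(α_n)` for `v(t,x)` is bounded in
`L^p([t,T];ℝ^r)`. -/
theorem statement15
    (d r : ℕ) (hd : 1 ≤ d) (hr : 1 ≤ r)
    (T : ℝ) (hT : 0 < T) (p : ℝ) (hp : 1 < p)
    (A : ℝ → (Fin d → ℝ) → (Fin d → ℝ)) (B : ℝ → ((Fin r → ℝ) →L[ℝ] (Fin d → ℝ)))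
    (hAcont : ContinuousOn (fun q : ℝ × (Fin d → ℝ) => A q.1 q.2) (Set.Icc 0 T ×ˢ Set.univ))
    (LA : ℝ) (hLA : 0 < LA)
    (hALip : ∀ t ∈ Set.Icc 0 T, ∀ x y : Fin d → ℝ, ‖A t x - A t y‖ ≤ LA * ‖x - y‖)
    (hBcont : ContinuousOn B (Set.Icc 0 T))
    (ℓ : ℝ → (Fin r → ℝ) → (Fin d → ℝ) → ℝ) (g : (Fin d → ℝ) → ℝ)
    (hℓcont : ContinuousOn
      (fun q : ℝ × (Fin r → ℝ) × (Fin d → ℝ) => ℓ q.1 q.2.1 q.2.2)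
      (Set.Icc 0 T ×ˢ (Set.univ : Set ((Fin r → ℝ) × (Fin d → ℝ)))))
    (hgcont : Continuous g)
    (Cl1 Cl2 Cl3 Cl4 Cg1 Cg2 Cg3 : ℝ)
    (hCl1 : 0 < Cl1) (hCl2 : 0 < Cl2) (hCl3 : 0 < Cl3) (hCl4 : 0 < Cl4)
    (hCg1 : 0 < Cg1) (hCg2 : 0 < Cg2) (hCg3 : 0 < Cg3)
    (hl_lb : ∀ t ∈ Set.Icc 0 T, ∀ (a : Fin r → ℝ) (x : Fin d → ℝ),
      Cl1 * ‖a‖ ^ p - Cl2 ≤ ℓ t a x)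
    (hl_ub : ∀ t ∈ Set.Icc 0 T, ∀ (a : Fin r → ℝ) (x : Fin d → ℝ),
      ℓ t a x ≤ Cl3 * (1 + ‖a‖ ^ p + ‖x‖ ^ p))
    (hl_lip : ∀ t ∈ Set.Icc 0 T, ∀ (a : Fin r → ℝ) (x y : Fin d → ℝ),
      |ℓ t a x - ℓ t a y| ≤ Cl4 * (1 + ‖x‖ ^ (p - 1) + ‖y‖ ^ (p - 1) + ‖a‖ ^ (p - 1)) * ‖x - y‖)
    (hg_lb : ∀ x : Fin d → ℝ, -Cg1 ≤ g x)
    (hg_ub : ∀ x : Fin d → ℝ, g x ≤ Cg2 * (1 + ‖x‖ ^ p))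
    (hg_lip : ∀ x y : Fin d → ℝ, |g x - g y| ≤ Cg3 * (1 + ‖x‖ ^ (p - 1) + ‖y‖ ^ (p - 1)) * ‖x - y‖)
    (t : ℝ) (ht : t ∈ Set.Icc 0 T) (x : Fin d → ℝ)
    (α : ℕ → ℝ → (Fin r → ℝ)) (γ : ℕ → ℝ → (Fin d → ℝ))
    (hα : ∀ n, IsControl r p T t (α n))
    (hγ : ∀ n, IsTrajectory d r T A B t x (α n) (γ n))
    (hmin : Tendsto (fun n => (∫ s in t..T, ℓ s (α n s) (γ n s)) + g (γ n T)) atTop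
      (nhds (value d r T p A B ℓ g t x))) :
    ∃ K : ℝ, ∀ n, (∫ s in t..T, ‖α n s‖ ^ p) ^ (1 / p) ≤ K :=
  statement15_general d r T p hp A B ℓ g hℓcont Cl1 Cl2 Cl3 Cg1 hCl1 hl_lb hl_ub hg_lb t ht x α γ hα
    hγ hmin
end
end
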